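/- Let α > 2, β > 0, d > 0, P_t > 0, σ² ≥ 0, λ_l > 0 and λ_v > 0. The function p ↦ π λ_l λ_v p · log₂(1+β) · exp(−βσ²d^α/P_t − 2pλ_v β^{1/α} d (π/α) csc(π/α)) on (0, ∞), which is the area spectral efficiency of the 1D Poisson bipolar network model, attains its maximum at the unique point p* = α / (2 λ_v d β^{1/α} π csc(π/α)); that is, it is strictly increasing on (0, p*) and strictly decreasing on (p*, ∞). -/

import Mathlib

/-!
After collecting the constants, `ASE(p) = K · p e^{-cp}` with `K > 0` and
`c = 2λ_v β^{1/α} d (π/α) csc(π/α) > 0` (positive because `α > 2` puts `π/α` in `(0, π)`).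
The kernel `p e^{-cp}` has derivative `(1 - cp) e^{-cp}`, so it increases strictly up to
`1/c` and decreases strictly after it; and `1/c` is exactly the claimed `p*`.
-/

open MeasureTheory Real

/-- The area spectral efficiency of the 1D Poisson bipolar network model as a
function of the transmission probability `p`:
`ASE(p) = πλ_lλ_v p · log₂(1+β) · exp(−βσ²d^α/P_t − 2pλ_v β^(1/α) d (π/α) csc(π/α))`. -/
noncomputable def ASE1D (α β d Pt σ2 laml lamv p : ℝ) : ℝ :=
  π * laml * lamv * p * Real.logb 2 (1 + β) *
    Real.exp (-(β * σ2 * d ^ α / Pt)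
      - 2 * p * lamv * β ^ (1 / α) * d * (π / α) * (Real.sin (π / α))⁻¹)

open Set

theorem apply_lt_of_strictMonoOn_Iic_of_strictAntiOn_Ici {α β : Type*} [LinearOrder α]
    [Preorder β] {f : α → β} {a x : α} (hmono : StrictMonoOn f (Iic a))
    (hanti : StrictAntiOn f (Ici a)) (hx : x ≠ a) : f x < f a :=
  hx.lt_or_gt.elim (fun h => hmono.mapsTo_Iio h) (fun h => hanti.mapsTo_Ioi h)

theorem apply_le_of_strictMonoOn_Iic_of_strictAntiOn_Ici {α β : Type*} [LinearOrder α]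
    [Preorder β] {f : α → β} {a : α} (hmono : StrictMonoOn f (Iic a))
    (hanti : StrictAntiOn f (Ici a)) (x : α) : f x ≤ f a := by
  rcases eq_or_ne x a with rfl | hx
  · exact le_rfl
  · exact (apply_lt_of_strictMonoOn_Iic_of_strictAntiOn_Ici hmono hanti hx).le

theorem hasDerivAt_mul_exp_neg_mul (c p : ℝ) :
    HasDerivAt (fun p => p * exp (-(c * p))) ((1 - c * p) * exp (-(c * p))) p := by
  have hexp : HasDerivAt (fun p => exp (-(c * p))) (exp (-(c * p)) * -c) p :=
    (((hasDerivAt_id p).const_mul c).neg.congr_deriv (by simp)).exp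
  refine ((hasDerivAt_id p).fun_mul hexp).congr_deriv ?_
  simp only [id]
  ring

theorem continuous_mul_exp_neg_mul (c : ℝ) : Continuous fun p : ℝ => p * exp (-(c * p)) := by
  fun_prop

theorem strictMonoOn_mul_exp_neg_mul {c : ℝ} (hc : 0 < c) :
    StrictMonoOn (fun p => p * exp (-(c * p))) (Iic c⁻¹) := by
  refine strictMonoOn_of_deriv_pos (convex_Iic _) (continuous_mul_exp_neg_mul c).continuousOn
    fun p hp => ?_
  rw [interior_Iic, mem_Iio] at hp
  have : c * p < 1 := by simpa [hc.ne'] using mul_lt_mul_of_pos_left hp hc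
  rw [(hasDerivAt_mul_exp_neg_mul c p).deriv]
  exact mul_pos (by linarith) (exp_pos _)

theorem strictAntiOn_mul_exp_neg_mul {c : ℝ} (hc : 0 < c) :
    StrictAntiOn (fun p => p * exp (-(c * p))) (Ici c⁻¹) := by
  refine strictAntiOn_of_deriv_neg (convex_Ici _) (continuous_mul_exp_neg_mul c).continuousOn
    fun p hp => ?_
  rw [interior_Ici, mem_Ioi] at hp
  have : 1 < c * p := by simpa [hc.ne'] using mul_lt_mul_of_pos_left hp hc
  rw [(hasDerivAt_mul_exp_neg_mul c p).deriv]
  exact mul_neg_of_neg_of_pos (by linarith) (exp_pos _)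

namespace ASE1D

noncomputable def rate (α β d lamv : ℝ) : ℝ :=
  2 * lamv * β ^ (1 / α) * d * (π / α) * (sin (π / α))⁻¹

noncomputable def gain (α β d Pt σ2 laml lamv : ℝ) : ℝ :=
  π * laml * lamv * logb 2 (1 + β) * exp (-(β * σ2 * d ^ α / Pt))

theorem eq_gain_mul (α β d Pt σ2 laml lamv p : ℝ) :
    ASE1D α β d Pt σ2 laml lamv p =
      gain α β d Pt σ2 laml lamv * (p * exp (-(rate α β d lamv * p))) := by
  rw [ASE1D, gain, rate, sub_eq_add_neg, exp_add]
  ring_nf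

theorem rate_pos {α β d lamv : ℝ} (hα : 1 < α) (hβ : 0 < β) (hd : 0 < d) (hlamv : 0 < lamv) :
    0 < rate α β d lamv := by
  have hsin : 0 < sin (π / α) :=
    sin_pos_of_pos_of_lt_pi (by positivity) (div_lt_self pi_pos hα)
  have := rpow_pos_of_pos hβ (1 / α)
  unfold rate
  positivity

theorem gain_pos {α β d Pt σ2 laml lamv : ℝ} (hβ : 0 < β) (hlaml : 0 < laml)
    (hlamv : 0 < lamv) : 0 < gain α β d Pt σ2 laml lamv := by
  have := logb_pos one_lt_two (lt_add_of_pos_right 1 hβ)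
  unfold gain
  positivity

theorem inv_rate (α β d lamv : ℝ) :
    (rate α β d lamv)⁻¹ = α / (2 * lamv * d * β ^ (1 / α) * π * (sin (π / α))⁻¹) := by
  rw [← inv_div, rate]
  congr 1
  ring

variable {α β d Pt σ2 laml lamv : ℝ}

theorem strictMonoOn_Iic (hα : 1 < α) (hβ : 0 < β) (hd : 0 < d) (hlaml : 0 < laml)
    (hlamv : 0 < lamv) :
    StrictMonoOn (ASE1D α β d Pt σ2 laml lamv) (Iic (rate α β d lamv)⁻¹) := by
  rw [funext (eq_gain_mul α β d Pt σ2 laml lamv)]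
  exact (strictMono_mul_left_of_pos (gain_pos hβ hlaml hlamv)).comp_strictMonoOn
    (strictMonoOn_mul_exp_neg_mul (rate_pos hα hβ hd hlamv))

theorem strictAntiOn_Ici (hα : 1 < α) (hβ : 0 < β) (hd : 0 < d) (hlaml : 0 < laml)
    (hlamv : 0 < lamv) :
    StrictAntiOn (ASE1D α β d Pt σ2 laml lamv) (Ici (rate α β d lamv)⁻¹) := by
  rw [funext (eq_gain_mul α β d Pt σ2 laml lamv)]
  exact (strictMono_mul_left_of_pos (gain_pos hβ hlaml hlamv)).comp_strictAntiOn
    (strictAntiOn_mul_exp_neg_mul (rate_pos hα hβ hd hlamv))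

end ASE1D

theorem ASE1D_max_general (α β d Pt σ2 laml lamv : ℝ)
    (hα : 2 < α) (hβ : 0 < β) (hd : 0 < d)
    (hlaml : 0 < laml) (hlamv : 0 < lamv) :
    (∀ q : ℝ, 0 < q →
      ASE1D α β d Pt σ2 laml lamv q
        ≤ ASE1D α β d Pt σ2 laml lamv
            (α / (2 * lamv * d * β ^ (1 / α) * π * (Real.sin (π / α))⁻¹))) ∧
    (∀ q : ℝ, 0 < q →
      ASE1D α β d Pt σ2 laml lamv q
          = ASE1D α β d Pt σ2 laml lamv
              (α / (2 * lamv * d * β ^ (1 / α) * π * (Real.sin (π / α))⁻¹)) →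
        q = α / (2 * lamv * d * β ^ (1 / α) * π * (Real.sin (π / α))⁻¹)) ∧
    StrictMonoOn (fun p : ℝ => ASE1D α β d Pt σ2 laml lamv p)
      (Set.Ioo 0 (α / (2 * lamv * d * β ^ (1 / α) * π * (Real.sin (π / α))⁻¹))) ∧
    StrictAntiOn (fun p : ℝ => ASE1D α β d Pt σ2 laml lamv p)
      (Set.Ioi (α / (2 * lamv * d * β ^ (1 / α) * π * (Real.sin (π / α))⁻¹))) := by
  rw [← ASE1D.inv_rate]
  have hα' : 1 < α := by linarith
  have hmono := ASE1D.strictMonoOn_Iic (Pt := Pt) (σ2 := σ2) hα' hβ hd hlaml hlamv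
  have hanti := ASE1D.strictAntiOn_Ici (Pt := Pt) (σ2 := σ2) hα' hβ hd hlaml hlamv
  refine ⟨fun q _ => apply_le_of_strictMonoOn_Iic_of_strictAntiOn_Ici hmono hanti q,
    fun q _ heq => ?_, hmono.mono (Ioo_subset_Iio_self.trans Iio_subset_Iic_self),
    hanti.mono Ioi_subset_Ici_self⟩
  by_contra hne
  exact (apply_lt_of_strictMonoOn_Iic_of_strictAntiOn_Ici hmono hanti hne).ne heq

/-- The ASE of the 1D Poisson bipolar network model attains its maximum on
`(0, ∞)` at the unique point `p* = α / (2λ_v d β^(1/α) π csc(π/α))`; it is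
strictly increasing on `(0, p*)` and strictly decreasing on `(p*, ∞)`. -/
theorem ASE1D_max (α β d Pt σ2 laml lamv : ℝ)
    (hα : 2 < α) (hβ : 0 < β) (hd : 0 < d) (hPt : 0 < Pt) (hσ2 : 0 ≤ σ2)
    (hlaml : 0 < laml) (hlamv : 0 < lamv) :
    (∀ q : ℝ, 0 < q →
      ASE1D α β d Pt σ2 laml lamv q
        ≤ ASE1D α β d Pt σ2 laml lamv
            (α / (2 * lamv * d * β ^ (1 / α) * π * (Real.sin (π / α))⁻¹))) ∧
    (∀ q : ℝ, 0 < q →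
      ASE1D α β d Pt σ2 laml lamv q
          = ASE1D α β d Pt σ2 laml lamv
              (α / (2 * lamv * d * β ^ (1 / α) * π * (Real.sin (π / α))⁻¹)) →
        q = α / (2 * lamv * d * β ^ (1 / α) * π * (Real.sin (π / α))⁻¹)) ∧
    StrictMonoOn (fun p : ℝ => ASE1D α β d Pt σ2 laml lamv p)
      (Set.Ioo 0 (α / (2 * lamv * d * β ^ (1 / α) * π * (Real.sin (π / α))⁻¹))) ∧
    StrictAntiOn (fun p : ℝ => ASE1D α β d Pt σ2 laml lamv p)
      (Set.Ioi (α / (2 * lamv * d * β ^ (1 / α) * π * (Real.sin (π / α))⁻¹))) :=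
  ASE1D_max_general α β d Pt σ2 laml lamv hα hβ hd hlaml hlamv
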